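/- arXiv:1906.00918 — 4 statements merged into one kernel-verified Lean document; each statement's English description precedes it below -/
import Mathlib

section
/- Let β ∈ (0,∞)^n and define the counting function N_β(r) = #{ν ∈ ℕ₀^n : Σ_{k=1}^n ν_k β_k ≤ r}. Then for all r ≥ 0, (1/n!) · r^n / ∏_{k=1}^n β_k ≤ N_β(r) ≤ (1/n!) · (r + Σ_{k=1}^n β_k)^n / ∏_{k=1}^n β_k. -/
open Finset

private lemma pow_succ_sub_le {x y : ℝ} (n : ℕ) (hy : 0 ≤ y) (hxy : y ≤ x) :
    x ^ (n+1) - y ^ (n+1) ≤ ((n:ℝ)+1) * x ^ n * (x - y) := by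
  have hx : 0 ≤ x := hy.trans hxy
  rw [← geom_sum₂_mul x y (n+1)]
  have hsum : (∑ i ∈ Finset.range (n+1), x ^ i * y ^ (n + 1 - 1 - i)) ≤ ((n:ℝ)+1) * x ^ n := by
    calc (∑ i ∈ Finset.range (n+1), x ^ i * y ^ (n + 1 - 1 - i))
        ≤ ∑ _i ∈ Finset.range (n+1), x ^ n := by
          apply Finset.sum_le_sum
          intro i hi
          have hi' : i ≤ n := Nat.lt_succ_iff.mp (Finset.mem_range.mp hi)
          calc x ^ i * y ^ (n + 1 - 1 - i) ≤ x ^ i * x ^ (n + 1 - 1 - i) :=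
                mul_le_mul_of_nonneg_left (pow_le_pow_left₀ hy hxy _) (pow_nonneg hx i)
            _ = x ^ n := by rw [← pow_add]; congr 1; omega
      _ = ((n:ℝ)+1) * x ^ n := by
          rw [Finset.sum_const, Finset.card_range, nsmul_eq_mul]; push_cast; ring
  exact mul_le_mul_of_nonneg_right hsum (sub_nonneg.mpr hxy)

private lemma le_pow_succ_sub {x y : ℝ} (n : ℕ) (hy : 0 ≤ y) (hxy : y ≤ x) :
    ((n:ℝ)+1) * y ^ n * (x - y) ≤ x ^ (n+1) - y ^ (n+1) := by
  have hx : 0 ≤ x := hy.trans hxy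
  rw [← geom_sum₂_mul x y (n+1)]
  have hsum : ((n:ℝ)+1) * y ^ n ≤ ∑ i ∈ Finset.range (n+1), x ^ i * y ^ (n + 1 - 1 - i) := by
    calc ((n:ℝ)+1) * y ^ n = ∑ _i ∈ Finset.range (n+1), y ^ n := by
          rw [Finset.sum_const, Finset.card_range, nsmul_eq_mul]; push_cast; ring
      _ ≤ ∑ i ∈ Finset.range (n+1), x ^ i * y ^ (n + 1 - 1 - i) := by
          apply Finset.sum_le_sum
          intro i hi
          have hi' : i ≤ n := Nat.lt_succ_iff.mp (Finset.mem_range.mp hi)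
          calc y ^ n = y ^ i * y ^ (n + 1 - 1 - i) := by rw [← pow_add]; congr 1; omega
            _ ≤ x ^ i * y ^ (n + 1 - 1 - i) :=
                mul_le_mul_of_nonneg_right (pow_le_pow_left₀ hy hxy _) (pow_nonneg hy _)
  exact mul_le_mul_of_nonneg_right hsum (sub_nonneg.mpr hxy)

private lemma S_finite (n : ℕ) (β : Fin n → ℝ) (hβ : ∀ k, 0 < β k) (r : ℝ) :
    {ν : Fin n → ℕ | (∑ k, (ν k : ℝ) * β k) ≤ r}.Finite := by
  apply Set.Finite.subset (Set.Finite.pi (fun k => Set.finite_Iic (⌊r / β k⌋₊)))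
  intro ν hν
  simp only [Set.mem_pi, Set.mem_univ, Set.mem_Iic, forall_true_left]
  intro k
  apply Nat.le_floor
  rw [le_div_iff₀ (hβ k)]
  calc (ν k : ℝ) * β k ≤ ∑ j, (ν j : ℝ) * β j := by
        apply Finset.single_le_sum (f := fun j => (ν j : ℝ) * β j) _ (Finset.mem_univ k)
        intro j _
        exact mul_nonneg (Nat.cast_nonneg _) (hβ j).le
    _ ≤ r := hν

private lemma card_rec (n : ℕ) (β : Fin (n+1) → ℝ) (hβ : ∀ k, 0 < β k) (r : ℝ) :
    {ν : Fin (n+1) → ℕ | (∑ k, (ν k : ℝ) * β k) ≤ r}.ncard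
      = ∑ j ∈ Finset.range (⌊r / β (Fin.last n)⌋₊ + 1),
          {μ : Fin n → ℕ | (∑ k, (μ k : ℝ) * Fin.init β k) ≤ r - j * β (Fin.last n)}.ncard := by
  classical
  set b := β (Fin.last n) with hb
  have hbpos : 0 < b := hβ _
  set J := ⌊r / b⌋₊ with hJ
  set T : ℕ → Set (Fin n → ℕ) :=
    fun j => {μ | (∑ k, (μ k : ℝ) * Fin.init β k) ≤ r - j * b} with hT
  have hTfin : ∀ j, (T j).Finite := fun j => S_finite n _ (fun k => hβ _) _
  have hsnoc_inj : ∀ j : ℕ, Function.Injective (fun μ : Fin n → ℕ => (Fin.snoc μ j : Fin (n+1) → ℕ)) := by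
    intro j μ₁ μ₂ h
    have h1 := congrArg Fin.init h
    simpa [Fin.init_snoc] using h1
  have hsum : ∀ ν : Fin (n+1) → ℕ,
      (∑ k, (ν k : ℝ) * β k)
        = (∑ k, ((Fin.init ν) k : ℝ) * Fin.init β k) + (ν (Fin.last n) : ℝ) * b := by
    intro ν
    rw [Fin.sum_univ_castSucc]
    rfl
  have hdec : {ν : Fin (n+1) → ℕ | (∑ k, (ν k : ℝ) * β k) ≤ r}
      = ⋃ j ∈ Finset.range (J+1), (fun μ : Fin n → ℕ => (Fin.snoc μ j : Fin (n+1) → ℕ)) '' T j := by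
    ext ν
    simp only [Set.mem_setOf_eq, Set.mem_iUnion, Finset.mem_range, Set.mem_image, hT]
    constructor
    · intro hν
      refine ⟨ν (Fin.last n), ?_, Fin.init ν, ?_, Fin.snoc_init_self ν⟩
      · have h1 : (ν (Fin.last n) : ℝ) * b ≤ r := by
          refine le_trans ?_ hν
          rw [hb]
          apply Finset.single_le_sum (f := fun j => (ν j : ℝ) * β j) _ (Finset.mem_univ _)
          intro j _
          exact mul_nonneg (Nat.cast_nonneg _) (hβ j).le
        have h2 : (ν (Fin.last n) : ℝ) ≤ r / b := (le_div_iff₀ hbpos).2 h1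
        exact Nat.lt_succ_of_le (Nat.le_floor h2)
      · show (∑ k, ((Fin.init ν) k : ℝ) * Fin.init β k) ≤ r - (ν (Fin.last n) : ℝ) * b
        have := hsum ν
        linarith [hν]
    · rintro ⟨j, hj, μ, hμ, rfl⟩
      have := hsum (Fin.snoc μ j)
      rw [this]
      have h1 : Fin.init (Fin.snoc μ j : Fin (n+1) → ℕ) = μ := by simp
      have h2 : (Fin.snoc μ j : Fin (n+1) → ℕ) (Fin.last n) = j := by simp
      rw [h1, h2]
      have hμ' : (∑ k, (μ k : ℝ) * Fin.init β k) ≤ r - (j:ℝ) * b := hμ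
      linarith
  rw [hdec]
  have hfin2 : ∀ j, ((fun μ : Fin n → ℕ => (Fin.snoc μ j : Fin (n+1) → ℕ)) '' T j).Finite :=
    fun j => (hTfin j).image _
  have hcoe : (⋃ j ∈ Finset.range (J+1), (fun μ : Fin n → ℕ => (Fin.snoc μ j : Fin (n+1) → ℕ)) '' T j)
      = ↑((Finset.range (J+1)).biUnion fun j => (hfin2 j).toFinset) := by
    simp [Finset.coe_biUnion, Set.Finite.coe_toFinset]
  rw [hcoe, Set.ncard_coe_finset, Finset.card_biUnion]
  · apply Finset.sum_congr rfl
    intro j _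
    rw [← Set.ncard_eq_toFinset_card _ (hfin2 j)]
    exact Set.ncard_image_of_injective _ (hsnoc_inj j)
  · intro j _ j' _ hjj'
    rw [Function.onFun, Finset.disjoint_left]
    intro ν hν hν'
    rw [Set.Finite.mem_toFinset] at hν hν'
    obtain ⟨μ, _, rfl⟩ := hν
    obtain ⟨μ', _, h⟩ := hν'
    have := congrArg (fun f : Fin (n+1) → ℕ => f (Fin.last n)) h
    simp only [Fin.snoc_last] at this
    exact hjj' this.symm

private lemma aux (n : ℕ) : ∀ (β : Fin n → ℝ), (∀ k, 0 < β k) → ∀ r : ℝ, 0 ≤ r →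
    r ^ n ≤ (n.factorial : ℝ) * (∏ k, β k) *
      ({ν : Fin n → ℕ | (∑ k, (ν k : ℝ) * β k) ≤ r}.ncard : ℝ) ∧
    (n.factorial : ℝ) * (∏ k, β k) *
      ({ν : Fin n → ℕ | (∑ k, (ν k : ℝ) * β k) ≤ r}.ncard : ℝ) ≤ (r + ∑ k, β k) ^ n := by
  induction n with
  | zero =>
    intro β hβ r hr
    have hset : {ν : Fin 0 → ℕ | (∑ k, (ν k : ℝ) * β k) ≤ r} = Set.univ := by
      ext ν; simp [hr]
    rw [hset]
    have h1 : (Set.univ : Set (Fin 0 → ℕ)).ncard = 1 := by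
      rw [Set.ncard_univ]
      exact Nat.card_unique
    rw [h1]
    norm_num
  | succ n ih =>
    intro β hβ r hr
    have hbpos : 0 < β (Fin.last n) := hβ _
    set b := β (Fin.last n) with hb
    set β' := Fin.init β with hβ'
    have hβ'pos : ∀ k, 0 < β' k := fun k => hβ _
    set J := ⌊r / b⌋₊ with hJ
    set c := ∑ k, β' k with hc
    set P := ∏ k, β' k with hP
    have hc0 : 0 ≤ c := Finset.sum_nonneg fun k _ => (hβ'pos k).le
    have hP0 : 0 < P := Finset.prod_pos fun k _ => hβ'pos k
    have hfac : (0:ℝ) < n.factorial := by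
      exact_mod_cast n.factorial_pos
    set N : ℕ → ℕ :=
      fun j => {μ : Fin n → ℕ | (∑ k, (μ k : ℝ) * β' k) ≤ r - j * b}.ncard with hN
    have hcardrec : {ν : Fin (n+1) → ℕ | (∑ k, (ν k : ℝ) * β k) ≤ r}.ncard
        = ∑ j ∈ Finset.range (J+1), N j := card_rec n β hβ r
    have hprod : (∏ k : Fin (n+1), β k) = P * b := by
      rw [Fin.prod_univ_castSucc]
      rfl
    have hsumβ : (∑ k : Fin (n+1), β k) = c + b := by
      rw [Fin.sum_univ_castSucc]
      rfl
    have hjle : ∀ j ∈ Finset.range (J+1), 0 ≤ r - (j:ℝ) * b := by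
      intro j hj
      have hj' : j ≤ J := Nat.lt_succ_iff.mp (Finset.mem_range.mp hj)
      have h1 : (j:ℝ) ≤ r / b :=
        le_trans (Nat.cast_le.mpr hj') (Nat.floor_le (div_nonneg hr hbpos.le))
      have h2 : (j:ℝ) * b ≤ r := by
        rw [← le_div_iff₀ hbpos]; exact h1
      linarith
    have ihj : ∀ j ∈ Finset.range (J+1),
        (r - (j:ℝ)*b) ^ n ≤ (n.factorial : ℝ) * P * (N j : ℝ) ∧
        (n.factorial : ℝ) * P * (N j : ℝ) ≤ (r - (j:ℝ)*b + c) ^ n :=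
      fun j hj => ih β' hβ'pos _ (hjle j hj)
    have hfacsucc : ((n+1).factorial : ℝ) = ((n:ℝ)+1) * n.factorial := by
      rw [Nat.factorial_succ]; push_cast; ring
    have hcast : ((∑ j ∈ Finset.range (J+1), N j : ℕ) : ℝ)
        = ∑ j ∈ Finset.range (J+1), (N j : ℝ) := by push_cast; rfl
    constructor
    · -- lower bound
      set f : ℕ → ℝ := fun j => (max (r - (j:ℝ)*b) 0)^(n+1) with hf
      have htel : ∑ j ∈ Finset.range (J+1), (f j - f (j+1)) = f 0 - f (J+1) :=
        Finset.sum_range_sub' f (J+1)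
      have hf0 : f 0 = r^(n+1) := by simp [hf, max_eq_left hr]
      have hfJ : f (J+1) = 0 := by
        have h1 : r / b < (J:ℝ) + 1 := Nat.lt_floor_add_one (r / b)
        have h2 : r < ((J:ℝ)+1) * b := by
          rw [div_lt_iff₀ hbpos] at h1; linarith
        have h3 : r - ((J+1:ℕ):ℝ) * b ≤ 0 := by push_cast; linarith
        simp only [hf]
        rw [max_eq_right h3]
        exact zero_pow (Nat.succ_ne_zero n)
      have hterm : ∀ j ∈ Finset.range (J+1),
          f j - f (j+1) ≤ ((n:ℝ)+1) * b * ((n.factorial : ℝ) * P * (N j : ℝ)) := by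
        intro j hj
        set x := r - (j:ℝ)*b with hx
        set y := max (r - ((j+1:ℕ):ℝ)*b) 0 with hy
        have hx0 : 0 ≤ x := hjle j hj
        have hy0 : 0 ≤ y := le_max_right _ _
        have hyx : y ≤ x := by
          apply max_le _ hx0
          have : (((j:ℕ)+1:ℕ):ℝ) * b = (j:ℝ)*b + b := by push_cast; ring
          rw [this]; simp [hx]; linarith [hbpos.le]
        have hxy_b : x - y ≤ b := by
          have h1 : r - ((j+1:ℕ):ℝ)*b ≤ y := le_max_left _ _
          have : (((j:ℕ)+1:ℕ):ℝ) * b = (j:ℝ)*b + b := by push_cast; ring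
          rw [this] at h1
          simp only [hx]
          linarith
        have hfj : f j = x^(n+1) := by
          simp only [hf]; rw [max_eq_left hx0]
        have hfj1 : f (j+1) = y^(n+1) := by
          simp only [hf, hy]
        calc f j - f (j+1) = x^(n+1) - y^(n+1) := by rw [hfj, hfj1]
          _ ≤ ((n:ℝ)+1) * x^n * (x - y) := pow_succ_sub_le n hy0 hyx
          _ ≤ ((n:ℝ)+1) * x^n * b := by
              apply mul_le_mul_of_nonneg_left hxy_b
              positivity
          _ = ((n:ℝ)+1) * b * x^n := by ring
          _ ≤ ((n:ℝ)+1) * b * ((n.factorial : ℝ) * P * (N j : ℝ)) := by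
              apply mul_le_mul_of_nonneg_left (ihj j hj).1
              positivity
      have hsum_le : r^(n+1) ≤
          ∑ j ∈ Finset.range (J+1), ((n:ℝ)+1) * b * ((n.factorial : ℝ) * P * (N j : ℝ)) := by
        rw [← hf0]
        calc f 0 = f 0 - f (J+1) := by rw [hfJ]; ring
          _ = ∑ j ∈ Finset.range (J+1), (f j - f (j+1)) := htel.symm
          _ ≤ _ := Finset.sum_le_sum hterm
      rw [hcardrec, hprod, hcast, hfacsucc]
      calc r^(n+1) ≤ _ := hsum_le
        _ = ((n:ℝ)+1) * ↑n.factorial * (P * b) * ∑ j ∈ Finset.range (J+1), (N j : ℝ) := by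
            rw [Finset.mul_sum]; apply Finset.sum_congr rfl; intro j _; ring
    · -- upper bound
      set g : ℕ → ℝ := fun j => (r - (j:ℝ)*b + c + b)^(n+1) with hg
      have htel : ∑ j ∈ Finset.range (J+1), (g j - g (j+1)) = g 0 - g (J+1) :=
        Finset.sum_range_sub' g (J+1)
      have hg0 : g 0 = (r + c + b)^(n+1) := by simp [hg]
      have hgJ : 0 ≤ g (J+1) := by
        have h1 : 0 ≤ r - (J:ℝ)*b := hjle J (Finset.self_mem_range_succ J)
        have h2 : r - ((J+1:ℕ):ℝ)*b + c + b = (r - (J:ℝ)*b) + c := by push_cast; ring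
        simp only [hg]
        rw [h2]
        positivity
      have hterm : ∀ j ∈ Finset.range (J+1),
          ((n:ℝ)+1) * b * ((n.factorial : ℝ) * P * (N j : ℝ)) ≤ g j - g (j+1) := by
        intro j hj
        set y := r - (j:ℝ)*b + c with hy
        set x := r - (j:ℝ)*b + c + b with hx
        have hy0 : 0 ≤ y := by
          have := hjle j hj; simp only [hy]; linarith
        have hyx : y ≤ x := by simp only [hx, hy]; linarith [hbpos.le]
        have hgj : g j = x^(n+1) := rfl
        have hgj1 : g (j+1) = y^(n+1) := by
          simp only [hg, hy]
          congr 1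
          push_cast; ring
        calc ((n:ℝ)+1) * b * ((n.factorial : ℝ) * P * (N j : ℝ))
            ≤ ((n:ℝ)+1) * b * (y^n) := by
              apply mul_le_mul_of_nonneg_left (ihj j hj).2
              positivity
          _ = ((n:ℝ)+1) * y^n * (x - y) := by
              have : x - y = b := by simp only [hx, hy]; ring
              rw [this]; ring
          _ ≤ x^(n+1) - y^(n+1) := le_pow_succ_sub n hy0 hyx
          _ = g j - g (j+1) := by rw [hgj, hgj1]
      rw [hcardrec, hprod, hcast, hfacsucc, hsumβ]
      have hsum_le : ∑ j ∈ Finset.range (J+1), ((n:ℝ)+1) * b * ((n.factorial : ℝ) * P * (N j : ℝ))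
          ≤ (r + c + b)^(n+1) := by
        calc _ ≤ ∑ j ∈ Finset.range (J+1), (g j - g (j+1)) := Finset.sum_le_sum hterm
          _ = g 0 - g (J+1) := htel
          _ ≤ g 0 := by linarith
          _ = (r + c + b)^(n+1) := hg0
      calc ((n:ℝ)+1) * ↑n.factorial * (P * b) * ∑ j ∈ Finset.range (J+1), (N j : ℝ)
          = ∑ j ∈ Finset.range (J+1), ((n:ℝ)+1) * b * ((n.factorial : ℝ) * P * (N j : ℝ)) := by
            rw [Finset.mul_sum]; apply Finset.sum_congr rfl; intro j _; ring
        _ ≤ (r + c + b)^(n+1) := hsum_le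
        _ = (r + (c + b))^(n+1) := by ring


/-- For `β ∈ (0,∞)^n` and the counting function
`N_β(r) = #{ν ∈ ℕ₀^n : Σ ν_k β_k ≤ r}`, one has
`(1/n!) r^n / ∏ β_k ≤ N_β(r) ≤ (1/n!) (r + Σ β_k)^n / ∏ β_k` for all `r ≥ 0`. -/
theorem stmt0 {n : ℕ} (hn : 0 < n) (β : Fin n → ℝ) (hβ : ∀ k, 0 < β k)
    (r : ℝ) (hr : 0 ≤ r) :
    r ^ n / ((n.factorial : ℝ) * ∏ k, β k)
      ≤ ({ν : Fin n → ℕ | (∑ k, (ν k : ℝ) * β k) ≤ r}.ncard : ℝ) ∧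
    ({ν : Fin n → ℕ | (∑ k, (ν k : ℝ) * β k) ≤ r}.ncard : ℝ)
      ≤ (r + ∑ k, β k) ^ n / ((n.factorial : ℝ) * ∏ k, β k) := by
  obtain ⟨h1, h2⟩ := aux n β hβ r hr
  have hD : 0 < (n.factorial : ℝ) * ∏ k, β k := by
    apply mul_pos
    · exact_mod_cast n.factorial_pos
    · exact Finset.prod_pos fun k _ => hβ k
  constructor
  · rw [div_le_iff₀ hD, mul_comm]
    exact h1
  · rw [le_div_iff₀ hD, mul_comm]
    exact h2
end

section
/- Let α ∈ (0,1)^n and let (γ_m)_{m∈ℕ} be a non-increasing rearrangement of the multiset {α^ν = ∏_k α_k^{ν_k} : ν ∈ ℕ₀^n}. Set c = n! · ∏_{k=1}^n log(1/α_k). Then for every m ≥ 1, γ_m ≤ (∏_{k=1}^n α_k)^{-1} · exp(−(c·m)^{1/n}). -/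
open Finset

lemma pow_add_bound (u b : ℝ) (hu : 0 ≤ u) (hb : 0 ≤ b) (n : ℕ) :
    (n + 1 : ℝ) * b * u ^ n + u ^ (n + 1) ≤ (u + b) ^ (n + 1) := by
  rw [add_pow]
  have hsub : ({n, n + 1} : Finset ℕ) ⊆ Finset.range (n + 2) := by
    intro i hi; simp at hi; rcases hi with h | h <;> simp [h]
  have := Finset.sum_le_sum_of_subset_of_nonneg hsub
    (fun i _ _ => by positivity :
      ∀ i ∈ Finset.range (n + 2), i ∉ ({n, n+1} : Finset ℕ) → (0:ℝ) ≤ u ^ i * b ^ (n + 1 - i) * ((n+1).choose i))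
  refine le_trans (le_of_eq ?_) this
  rw [Finset.sum_pair (by omega : n ≠ n + 1)]
  have h1 : n + 1 - n = 1 := by omega
  have h2 : n + 1 - (n + 1) = 0 := by omega
  rw [h1, h2, Nat.choose_succ_self_right, Nat.choose_self]
  push_cast; ring

lemma simplex_count : ∀ (n : ℕ) (β : Fin n → ℝ), (∀ k, 0 < β k) → ∀ (s : ℝ), 0 ≤ s →
    ∀ (F : Finset (Fin n → ℕ)), (∀ ν ∈ F, ∑ k, (ν k : ℝ) * β k ≤ s) →
    (n.factorial : ℝ) * (∏ k, β k) * F.card ≤ (s + ∑ k, β k) ^ n := by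
  intro n
  induction n with
  | zero =>
    intro β hβ s hs F hF
    simp only [Nat.factorial_zero, Nat.cast_one, Finset.univ_eq_empty, Finset.prod_empty,
      Finset.sum_empty, pow_zero, one_mul, add_zero]
    have : F.card ≤ 1 := Finset.card_le_one.2 (fun a _ b _ => Subsingleton.elim a b)
    exact_mod_cast this
  | succ n ih =>
    intro β hβ s hs F hF
    set β0 := β 0 with hβ0def
    have hβ0 : 0 < β0 := hβ 0
    set β' : Fin n → ℝ := fun k => β k.succ with hβ'def
    have hβ' : ∀ k, 0 < β' k := fun k => hβ _
    set J := ⌊s / β0⌋₊ with hJ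
    -- every ν ∈ F has ν 0 ≤ J
    have hmem : ∀ ν ∈ F, ν 0 < J + 1 := by
      intro ν hν
      have h1 : (ν 0 : ℝ) * β0 ≤ s := by
        refine le_trans ?_ (hF ν hν)
        rw [Fin.sum_univ_succ]
        have : (0:ℝ) ≤ ∑ k : Fin n, (ν k.succ : ℝ) * β k.succ :=
          Finset.sum_nonneg fun k _ => mul_nonneg (Nat.cast_nonneg _) (hβ _).le
        linarith
      have : (ν 0 : ℝ) ≤ s / β0 := (le_div_iff₀ hβ0).2 h1
      have := Nat.le_floor this
      omega
    have hcard : F.card = ∑ j ∈ Finset.range (J + 1), (F.filter fun ν => ν 0 = j).card :=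
      Finset.card_eq_sum_card_fiberwise (fun ν hν => Finset.mem_range.2 (hmem ν hν))
    -- fiber cards via tail image
    have hfiber : ∀ j, (n.factorial : ℝ) * (∏ k, β' k) * (F.filter fun ν => ν 0 = j).card ≤
        (s - j * β0 + ∑ k, β' k) ^ n ∨ (F.filter fun ν => ν 0 = j).card = 0 := by
      intro j
      by_cases hne : (F.filter fun ν => ν 0 = j).Nonempty
      · left
        obtain ⟨ν₀, hν₀⟩ := hne
        have hjs : (j : ℝ) * β0 ≤ s := by
          simp only [Finset.mem_filter] at hν₀
          have := hmem ν₀ hν₀.1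
          calc (j : ℝ) * β0 = (ν₀ 0 : ℝ) * β0 := by rw [hν₀.2]
            _ ≤ s := by
              refine le_trans ?_ (hF ν₀ hν₀.1)
              rw [Fin.sum_univ_succ]
              have : (0:ℝ) ≤ ∑ k : Fin n, (ν₀ k.succ : ℝ) * β k.succ :=
                Finset.sum_nonneg fun k _ => mul_nonneg (Nat.cast_nonneg _) (hβ _).le
              linarith
        set tl : (Fin (n+1) → ℕ) → (Fin n → ℕ) := fun ν i => ν i.succ with htl
        set G := (F.filter fun ν => ν 0 = j).image tl with hG
        have hinj : Set.InjOn tl ↑(F.filter fun ν => ν 0 = j) := by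
          intro a ha b hb hab
          simp only [Finset.coe_filter, Set.mem_setOf_eq] at ha hb
          funext k
          refine Fin.cases ?_ ?_ k
          · rw [ha.2, hb.2]
          · intro i; exact congrFun hab i
        have hGcard : G.card = (F.filter fun ν => ν 0 = j).card :=
          Finset.card_image_of_injOn hinj
        have hGle : ∀ τ ∈ G, ∑ k, (τ k : ℝ) * β' k ≤ s - j * β0 := by
          intro τ hτ
          obtain ⟨ν, hν, rfl⟩ := Finset.mem_image.1 hτ
          simp only [Finset.mem_filter] at hν
          have := hF ν hν.1
          rw [Fin.sum_univ_succ, hν.2] at this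
          simp only [htl, hβ'def]
          linarith
        have := ih β' hβ' (s - j * β0) (by linarith) G hGle
        rw [hGcard] at this
        exact this
      · right
        rw [Finset.not_nonempty_iff_eq_empty] at hne
        simp [hne]
    -- main chain
    have hfac : (((n+1).factorial : ℕ) : ℝ) = ((n:ℝ)+1) * n.factorial := by
      rw [Nat.factorial_succ]; push_cast; ring
    have hprod : ∏ k : Fin (n+1), β k = β0 * ∏ k, β' k := by
      rw [Fin.prod_univ_succ]
    have hsumβ : ∑ k : Fin (n+1), β k = β0 + ∑ k, β' k := by
      rw [Fin.sum_univ_succ]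
    rw [hfac, hprod, hsumβ, hcard]
    push_cast
    have key : ∀ j ∈ Finset.range (J + 1),
        ((n+1 : ℝ) * n.factorial) * (β0 * ∏ k, β' k) * (F.filter fun ν => ν 0 = j).card ≤
        (s - j * β0 + β0 + ∑ k, β' k) ^ (n+1) - (s - (j+1) * β0 + β0 + ∑ k, β' k) ^ (n+1) := by
      intro j hj
      have hjJ : j ≤ J := by simpa using Nat.lt_succ_iff.1 (Finset.mem_range.1 hj)
      have hjs : (j : ℝ) * β0 ≤ s := by
        calc (j : ℝ) * β0 ≤ J * β0 := by
              apply mul_le_mul_of_nonneg_right _ hβ0.le; exact_mod_cast hjJ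
          _ ≤ s := by
              rw [← le_div_iff₀ hβ0]; exact Nat.floor_le (by positivity)
      set u : ℝ := s - j * β0 + ∑ k, β' k with hu
      have hu0 : 0 ≤ u := by
        have : (0:ℝ) ≤ ∑ k, β' k := Finset.sum_nonneg fun k _ => (hβ' k).le
        simp only [hu]; linarith
      have heq : s - (j+1 : ℝ) * β0 + β0 + ∑ k, β' k = u := by simp only [hu]; ring
      rw [heq]
      have heq2 : s - (j:ℝ) * β0 + β0 + ∑ k, β' k = u + β0 := by simp only [hu]; ring
      rw [heq2]
      have hpab := pow_add_bound u β0 hu0 hβ0.le n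
      rcases hfiber j with hle | hzero
      · have hcnn : (0:ℝ) ≤ ((F.filter fun ν => ν 0 = j).card : ℝ) := Nat.cast_nonneg _
        nlinarith [hle, hpab, mul_le_mul_of_nonneg_left hle (by positivity : (0:ℝ) ≤ (n+1:ℝ))]
      · rw [hzero]
        simp only [Nat.cast_zero, mul_zero]
        have := pow_le_pow_left₀ hu0 (by linarith : u ≤ u + β0) (n+1)
        linarith
    calc ((n:ℝ)+1) * n.factorial * (β0 * ∏ k, β' k) *
          ∑ j ∈ Finset.range (J+1), ((F.filter fun ν => ν 0 = j).card : ℝ)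
        = ∑ j ∈ Finset.range (J+1), ((n+1 : ℝ) * n.factorial) * (β0 * ∏ k, β' k) *
            ((F.filter fun ν => ν 0 = j).card : ℝ) := by
          rw [Finset.mul_sum]
      _ ≤ ∑ j ∈ Finset.range (J+1),
            ((s - j * β0 + β0 + ∑ k, β' k) ^ (n+1) - (s - (j+1) * β0 + β0 + ∑ k, β' k) ^ (n+1)) :=
          Finset.sum_le_sum key
      _ = (s - 0 * β0 + β0 + ∑ k, β' k) ^ (n+1) - (s - (J+1) * β0 + β0 + ∑ k, β' k) ^ (n+1) := by
          have := Finset.sum_range_sub' (f := fun j => (s - j * β0 + β0 + ∑ k, β' k) ^ (n+1)) (J+1)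
          push_cast at this ⊢
          convert this using 2
      _ ≤ (s + (β0 + ∑ k : Fin n, β' k)) ^ (n+1) := by
          have hJs : (J : ℝ) * β0 ≤ s := by
            rw [← le_div_iff₀ hβ0]; exact Nat.floor_le (by positivity)
          have h1 : (0:ℝ) ≤ ∑ k, β' k := Finset.sum_nonneg fun k _ => (hβ' k).le
          have h2 : (0:ℝ) ≤ s - (J+1 : ℝ) * β0 + β0 + ∑ k, β' k := by push_cast; linarith
          have := pow_nonneg h2 (n+1)
          have heq3 : s - (0:ℝ) * β0 + β0 + ∑ k, β' k = s + (β0 + ∑ k, β' k) := by ring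
          rw [heq3]
          linarith
  -- done induction

/-- Let `α ∈ (0,1)^n` and let `γ` (here 0-indexed: `γ (m-1)` is the m-th
term) be a non-increasing rearrangement of `{α^ν : ν ∈ ℕ₀^n}`, witnessed by a bijection
`e : ℕ ≃ (Fin n → ℕ)`.  With `c = n! ∏ log(1/α_k)`, for every `m ≥ 1`,
`γ_m ≤ (∏ α_k)⁻¹ exp(−(c m)^{1/n})`. -/
theorem stmt1 {n : ℕ} (hn : 0 < n) (α : Fin n → ℝ)
    (hα0 : ∀ k, 0 < α k) (hα1 : ∀ k, α k < 1)
    (γ : ℕ → ℝ) (e : ℕ ≃ (Fin n → ℕ))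
    (hγ : ∀ m, γ m = ∏ k, α k ^ (e m k))
    (hmono : Antitone γ) :
    ∀ m : ℕ, 1 ≤ m →
      γ (m - 1) ≤ (∏ k, α k)⁻¹ *
        Real.exp (-(((n.factorial : ℝ) * ∏ k, Real.log (1 / α k)) * m) ^ ((1 : ℝ) / n)) := by
  intro m hm
  set β : Fin n → ℝ := fun k => Real.log (1 / α k) with hβdef
  have hβ : ∀ k, 0 < β k := fun k => Real.log_pos (one_lt_one_div (hα0 k) (hα1 k))
  set t := γ (m - 1) with ht
  have hγpos : ∀ i, 0 < γ i := by
    intro i; rw [hγ i]; exact Finset.prod_pos fun k _ => pow_pos (hα0 k) _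
  have htpos : 0 < t := hγpos _
  have htle1 : t ≤ 1 := by
    rw [ht, hγ]
    exact Finset.prod_le_one (fun k _ => pow_nonneg (hα0 k).le _)
      (fun k _ => pow_le_one₀ (hα0 k).le (hα1 k).le)
  set s := -Real.log t with hs
  have hs0 : 0 ≤ s := by
    rw [hs]; simp only [neg_nonneg]; exact Real.log_nonpos htpos.le htle1
  have hlogγ : ∀ i, Real.log (γ i) = -∑ k, (e i k : ℝ) * β k := by
    intro i
    rw [hγ i, Real.log_prod (fun k _ => (pow_pos (hα0 k) _).ne')]
    rw [← Finset.sum_neg_distrib]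
    refine Finset.sum_congr rfl fun k _ => ?_
    rw [Real.log_pow, hβdef]
    simp only [one_div, Real.log_inv]
    ring
  set F : Finset (Fin n → ℕ) := (Finset.range m).image e with hF
  have hFcard : F.card = m := by
    rw [hF, Finset.card_image_of_injective _ e.injective, Finset.card_range]
  have hFmem : ∀ ν ∈ F, ∑ k, (ν k : ℝ) * β k ≤ s := by
    intro ν hν
    obtain ⟨i, hi, rfl⟩ := Finset.mem_image.1 hν
    have hi' := Finset.mem_range.1 hi
    have hile : i ≤ m - 1 := by omega
    have hγi : t ≤ γ i := hmono hile
    have h1 : Real.log t ≤ Real.log (γ i) := Real.log_le_log htpos hγi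
    rw [hlogγ i] at h1
    rw [hs]; linarith
  have hcount := simplex_count n β hβ s hs0 F hFmem
  rw [hFcard] at hcount
  set B := ∑ k, β k with hB
  have : Nonempty (Fin n) := ⟨⟨0, hn⟩⟩
  have hB0 : 0 < B := Finset.sum_pos (fun k _ => hβ k) Finset.univ_nonempty
  have hcm0 : 0 ≤ ((n.factorial : ℝ) * ∏ k, β k) * m := by
    have : 0 < ∏ k, β k := Finset.prod_pos fun k _ => hβ k
    positivity
  have hrpow : (((n.factorial : ℝ) * ∏ k, β k) * m) ^ ((1:ℝ)/n) ≤ s + B := by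
    have h1 : (((n.factorial : ℝ) * ∏ k, β k) * m) ^ ((1:ℝ)/n) ≤ ((s + B) ^ n) ^ ((1:ℝ)/n) :=
      Real.rpow_le_rpow hcm0 hcount (by positivity)
    rw [one_div]
    rwa [one_div, Real.pow_rpow_inv_natCast (by linarith) hn.ne'] at h1
  -- final chain
  have hexp : (∏ k, α k) * t ≤ Real.exp (-(((n.factorial : ℝ) * ∏ k, β k) * m) ^ ((1:ℝ)/n)) := by
    have hprodα : ∏ k, α k = Real.exp (-B) := by
      rw [hB, ← Finset.sum_neg_distrib, Real.exp_sum]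
      refine Finset.prod_congr rfl fun k _ => ?_
      rw [hβdef]
      simp only [one_div, Real.log_inv, neg_neg, Real.exp_log (hα0 k)]
    have htexp : t = Real.exp (-s) := by rw [hs, neg_neg, Real.exp_log htpos]
    rw [hprodα, htexp, ← Real.exp_add]
    apply Real.exp_le_exp.2
    linarith
  have hprodpos : 0 < ∏ k, α k := Finset.prod_pos fun k _ => hα0 k
  calc t = (∏ k, α k)⁻¹ * ((∏ k, α k) * t) := by field_simp
    _ ≤ (∏ k, α k)⁻¹ * Real.exp (-(((n.factorial : ℝ) * ∏ k, β k) * m) ^ ((1:ℝ)/n)) :=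
        mul_le_mul_of_nonneg_left hexp (by positivity)
    _ = _ := by rw [hβdef]
end

section
/- Let α ∈ (0,1)^n, let (γ_m) be a non-increasing rearrangement of {α^ν : ν ∈ ℕ₀^n}, and set c = n! · ∏_{k=1}^n log(1/α_k). Then for every m ≥ 0, Σ_{l=m+1}^∞ γ_l ≤ (∏_{k=1}^n α_k log(1/α_k))^{-1} · Σ_{k=0}^{n−1} (c·m)^{k/n}/k! · exp(−(c·m)^{1/n}). -/
open Finset

lemma aux_pow_key (n : ℕ) {a b : ℝ} (ha : 0 ≤ a) (hb : 0 ≤ b) :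
    ((n : ℝ)+1) * b * a^n + a^(n+1) ≤ (a+b)^(n+1) := by
  induction n with
  | zero => simp; nlinarith
  | succ n ih =>
      have h1 : (a+b)^(n+1+1) = (a+b) * (a+b)^(n+1) := by ring
      have h2 : (a+b) * (((n:ℝ)+1) * b * a^n + a^(n+1)) ≤ (a+b) * (a+b)^(n+1) := by
        apply mul_le_mul_of_nonneg_left ih (by linarith)
      have hpow : 0 ≤ a ^ n := pow_nonneg ha n
      have expand : (a+b) * (((n:ℝ)+1)*b*a^n + a^(n+1))
          = ((n:ℝ)+1+1)*b*a^(n+1) + a^(n+1+1) + ((n:ℝ)+1)*b^2*a^n := by ring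
      have hnn : (0:ℝ) ≤ ((n:ℝ)+1)*b^2*a^n := by positivity
      push_cast
      linarith [h2, expand, hnn, h1]

lemma aux_count : ∀ (n : ℕ) (β : Fin n → ℝ), (∀ k, 0 < β k) → ∀ (σ : ℝ), 0 ≤ σ →
    ∀ (F : Finset (Fin n → ℕ)), (∀ ν ∈ F, ∑ k, β k * ν k ≤ σ) →
    (n.factorial : ℝ) * (∏ k, β k) * F.card ≤ (σ + ∑ k, β k)^n := by
  intro n
  induction n with
  | zero =>
      intro β hβ σ hσ F hF
      simp only [Nat.factorial_zero, Nat.cast_one, univ_eq_empty, prod_empty, sum_empty, pow_zero,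
        one_mul]
      have : F ⊆ {fun x => 0} := by
        intro ν _; simp [Finset.mem_singleton]; funext k; exact absurd k.2 (by omega)
      calc (F.card : ℝ) ≤ ({fun x => 0} : Finset (Fin 0 → ℕ)).card := by
              exact_mod_cast Finset.card_le_card this
        _ = 1 := by simp
  | succ n ih =>
      intro β hβ σ hσ F hF
      set β0 := β 0 with hβ0def
      have hβ0 : 0 < β0 := hβ 0
      set β' : Fin n → ℝ := fun k => β k.succ with hβ'def
      set b' : ℝ := ∑ k, β' k with hb'def
      have hb' : 0 ≤ b' := Finset.sum_nonneg fun k _ => (hβ k.succ).le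
      set J : ℕ := ⌊σ / β0⌋₊ with hJdef
      have hJle : (J : ℝ) * β0 ≤ σ := by
        have := Nat.floor_le (a := σ / β0) (by positivity)
        calc (J:ℝ) * β0 ≤ (σ/β0) * β0 := by
              apply mul_le_mul_of_nonneg_right this hβ0.le
          _ = σ := by field_simp
      -- each ν ∈ F has ν 0 ≤ J
      have hmem : ∀ ν ∈ F, ν 0 ∈ Finset.range (J+1) := by
        intro ν hν
        rw [Finset.mem_range, Nat.lt_succ_iff]
        apply Nat.le_floor
        rw [le_div_iff₀ hβ0]
        calc (ν 0 : ℝ) * β0 = β0 * (ν 0) := by ring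
          _ ≤ ∑ k, β k * ν k := by
              rw [Fin.sum_univ_succ]
              have : (0:ℝ) ≤ ∑ k : Fin n, β k.succ * (ν k.succ) :=
                Finset.sum_nonneg fun k _ => mul_nonneg (hβ k.succ).le (Nat.cast_nonneg _)
              linarith
          _ ≤ σ := hF ν hν
      have hcard := Finset.card_eq_sum_card_fiberwise hmem
      have hfib : ∀ j ∈ Finset.range (J+1),
          (n.factorial : ℝ) * (∏ k, β' k) * ((F.filter (fun ν => ν 0 = j)).card)
            ≤ (σ + b' - β0 * j)^n := by
        intro j hj
        rw [Finset.mem_range, Nat.lt_succ_iff] at hj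
        have hjle : β0 * j ≤ σ := by
          calc β0 * j ≤ β0 * J := by
                apply mul_le_mul_of_nonneg_left (by exact_mod_cast hj) hβ0.le
            _ = (J:ℝ) * β0 := by ring
            _ ≤ σ := hJle
        set Fj := F.filter (fun ν => ν 0 = j) with hFj
        have hinj : Set.InjOn (fun ν : Fin (n+1) → ℕ => ν ∘ Fin.succ) Fj := by
          intro x hx y hy hxy
          simp only [hFj, Finset.coe_filter, Set.mem_setOf_eq] at hx hy
          funext k
          rcases Fin.eq_zero_or_eq_succ k with hk | ⟨k', hk⟩
          · rw [hk, hx.2, hy.2]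
          · rw [hk]
            exact congrFun hxy k'
        have hmem' : ∀ ν' ∈ Fj.image (fun ν => ν ∘ Fin.succ),
            ∑ k, β' k * ν' k ≤ σ - β0 * j := by
          intro ν' hν'
          rw [Finset.mem_image] at hν'
          obtain ⟨ν, hν, rfl⟩ := hν'
          rw [Finset.mem_filter] at hν
          have h1 := hF ν hν.1
          rw [Fin.sum_univ_succ, hν.2] at h1
          simp only [Function.comp, hβ'def]
          linarith
        have := ih β' (fun k => hβ k.succ) (σ - β0 * j) (by linarith)
          (Fj.image (fun ν => ν ∘ Fin.succ)) hmem'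
        rw [Finset.card_image_of_injOn hinj] at this
        calc (n.factorial : ℝ) * (∏ k, β' k) * (Fj.card)
            ≤ (σ - β0 * j + b')^n := this
          _ = (σ + b' - β0 * j)^n := by ring_nf
      -- telescoping
      have hJ1 : β0 * J ≤ σ := by linarith [hJle]
      have hkey : ∀ j ∈ Finset.range (J+1),
          ((n:ℝ)+1) * β0 * (σ + b' - β0*j)^n
            ≤ (σ + b' + β0 - β0*j)^(n+1) - (σ + b' + β0 - β0*(j+1))^(n+1) := by
        intro j hj
        rw [Finset.mem_range, Nat.lt_succ_iff] at hj
        have ha : (0:ℝ) ≤ σ + b' - β0*j := by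
          have : β0 * j ≤ β0 * J := by
            apply mul_le_mul_of_nonneg_left (by exact_mod_cast hj) hβ0.le
          linarith
        have := aux_pow_key n ha hβ0.le
        have e1 : σ + b' - β0*j + β0 = σ + b' + β0 - β0*j := by ring
        have e2 : σ + b' - β0*j = σ + b' + β0 - β0*(j+1) := by ring
        calc ((n:ℝ)+1) * β0 * (σ + b' - β0*j)^n
            ≤ (σ + b' - β0*j + β0)^(n+1) - (σ + b' - β0*j)^(n+1) := by linarith
          _ = (σ + b' + β0 - β0*j)^(n+1) - (σ + b' + β0 - β0*(j+1))^(n+1) := by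
              rw [e1]; rw [e2]
      have htel : ∑ j ∈ Finset.range (J+1),
          ((σ + b' + β0 - β0*j)^(n+1) - (σ + b' + β0 - β0*(j+1))^(n+1))
          ≤ (σ + b' + β0)^(n+1) := by
        set f : ℕ → ℝ := fun j => (σ + b' + β0 - β0*(j:ℕ))^(n+1) with hfdef
        have h0 : (0:ℝ) ≤ f (J+1) := by
          apply pow_nonneg; push_cast; linarith
        calc ∑ j ∈ Finset.range (J+1),
              ((σ + b' + β0 - β0*j)^(n+1) - (σ + b' + β0 - β0*(j+1))^(n+1))
            = ∑ j ∈ Finset.range (J+1), (f j - f (j+1)) := by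
              apply Finset.sum_congr rfl
              intro j _
              simp only [hfdef]
              push_cast
              ring
          _ = f 0 - f (J+1) := Finset.sum_range_sub' f (J+1)
          _ ≤ f 0 := by linarith
          _ = (σ + b' + β0)^(n+1) := by simp [hfdef]
      -- assembly
      have hsum : ∑ k, β k = β0 + b' := by
        rw [hb'def, hβ0def, hβ'def, Fin.sum_univ_succ]
      have hprod : ∏ k, β k = β0 * ∏ k, β' k := by
        rw [hβ0def, hβ'def, Fin.prod_univ_succ]
      rw [hsum, hprod]
      have hcast : (F.card : ℝ) = ∑ j ∈ Finset.range (J+1),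
          ((F.filter (fun ν => ν 0 = j)).card : ℝ) := by
        exact_mod_cast hcard
      have hsplit : (n.factorial : ℝ) * (∏ k, β' k) * F.card
          = ∑ j ∈ Finset.range (J+1),
              ((n.factorial : ℝ) * (∏ k, β' k) * ((F.filter (fun ν => ν 0 = j)).card)) := by
        rw [hcast, Finset.mul_sum]
      calc ((n+1).factorial : ℝ) * (β0 * ∏ k, β' k) * F.card
          = ((n:ℝ)+1) * β0 * ((n.factorial : ℝ) * (∏ k, β' k) * F.card) := by
            rw [Nat.factorial_succ]; push_cast; ring
        _ = ((n:ℝ)+1) * β0 * ∑ j ∈ Finset.range (J+1),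
              ((n.factorial : ℝ) * (∏ k, β' k) * ((F.filter (fun ν => ν 0 = j)).card)) := by
            rw [hsplit]
        _ ≤ ((n:ℝ)+1) * β0 * ∑ j ∈ Finset.range (J+1), (σ + b' - β0*j)^n := by
            apply mul_le_mul_of_nonneg_left (Finset.sum_le_sum hfib)
            positivity
        _ = ∑ j ∈ Finset.range (J+1), ((n:ℝ)+1) * β0 * (σ + b' - β0*j)^n := by
            rw [Finset.mul_sum]
        _ ≤ ∑ j ∈ Finset.range (J+1),
              ((σ + b' + β0 - β0*j)^(n+1) - (σ + b' + β0 - β0*(j+1))^(n+1)) :=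
            Finset.sum_le_sum hkey
        _ ≤ (σ + b' + β0)^(n+1) := htel
        _ = (σ + (β0 + b'))^(n+1) := by ring

lemma aux_hasDeriv (N : ℕ) (b t : ℝ) :
    HasDerivAt (fun t => (∑ k ∈ Finset.range (N+1), t^k / (k.factorial:ℝ)) * Real.exp (-t)
      + Real.exp (-b) * t^(N+1) / (((N+1).factorial : ℝ)))
      ((t^N / (N.factorial:ℝ)) * (Real.exp (-b) - Real.exp (-t))) t := by
  have hS : HasDerivAt (fun t : ℝ => ∑ k ∈ Finset.range (N+1), t^k / (k.factorial:ℝ))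
      (∑ k ∈ Finset.range N, t^k / (k.factorial:ℝ)) t := by
    have h1 : HasDerivAt (fun t : ℝ => ∑ k ∈ Finset.range (N+1), t^k / (k.factorial:ℝ))
        (∑ k ∈ Finset.range (N+1), ((k:ℝ) * t^(k-1) / (k.factorial:ℝ))) t := by
      apply HasDerivAt.fun_sum
      intro k _
      exact (hasDerivAt_pow k t).div_const _
    have h2 : ∑ k ∈ Finset.range (N+1), ((k:ℝ) * t^(k-1) / (k.factorial:ℝ))
        = ∑ k ∈ Finset.range N, t^k / (k.factorial:ℝ) := by
      rw [Finset.sum_range_succ']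
      simp only [Nat.cast_zero, zero_mul, Nat.factorial_zero, Nat.cast_one, zero_div, add_zero]
      apply Finset.sum_congr rfl
      intro k _
      rw [Nat.factorial_succ]
      have hk : ((k:ℝ)+1) ≠ 0 := by positivity
      have hkf : ((k.factorial:ℝ)) ≠ 0 := by positivity
      have : k + 1 - 1 = k := rfl
      rw [this]
      push_cast
      field_simp
    rwa [h2] at h1
  have hE : HasDerivAt (fun t : ℝ => Real.exp (-t)) (-Real.exp (-t)) t := by
    simpa using (hasDerivAt_neg t).exp
  have hP : HasDerivAt (fun t : ℝ => Real.exp (-b) * t^(N+1) / (((N+1).factorial : ℝ)))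
      (Real.exp (-b) * (((N:ℝ)+1) * t^N) / (((N+1).factorial : ℝ))) t := by
    have := ((hasDerivAt_pow (N+1) t).const_mul (Real.exp (-b))).div_const
      (((N+1).factorial : ℝ))
    simpa using this
  have := (hS.mul hE).add hP
  refine this.congr_deriv ?_
  rw [Finset.sum_range_succ, Nat.factorial_succ]
  have hN : ((N.factorial : ℝ)) ≠ 0 := by positivity
  push_cast
  field_simp
  ring

lemma aux_step (N : ℕ) {a b : ℝ} (ha : 0 ≤ a) (hab : a ≤ b) :
    Real.exp (-b) * (b^(N+1) - a^(N+1)) / (((N+1).factorial : ℝ))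
      ≤ (∑ k ∈ Finset.range (N+1), a^k / (k.factorial:ℝ)) * Real.exp (-a)
        - (∑ k ∈ Finset.range (N+1), b^k / (k.factorial:ℝ)) * Real.exp (-b) := by
  set H : ℝ → ℝ := fun t => (∑ k ∈ Finset.range (N+1), t^k / (k.factorial:ℝ)) * Real.exp (-t)
      + Real.exp (-b) * t^(N+1) / (((N+1).factorial : ℝ)) with hHdef
  have hanti : AntitoneOn H (Set.Icc 0 b) := by
    apply antitoneOn_of_deriv_nonpos (convex_Icc 0 b)
    · exact Continuous.continuousOn (by
        apply Continuous.add
        · exact (continuous_finset_sum _ fun k _ =>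
            (continuous_pow k).div_const _).mul (Real.continuous_exp.comp continuous_neg)
        · exact ((continuous_const.mul (continuous_pow (N+1))).div_const _))
    · intro t _
      exact (aux_hasDeriv N b t).differentiableAt.differentiableWithinAt
    · intro t ht
      rw [interior_Icc, Set.mem_Ioo] at ht
      rw [(aux_hasDeriv N b t).deriv]
      apply mul_nonpos_of_nonneg_of_nonpos
      · exact div_nonneg (pow_nonneg ht.1.le N) (by positivity)
      · exact sub_nonpos.mpr (Real.exp_le_exp.mpr (by linarith [ht.2]))
  have hH := hanti (Set.mem_Icc.mpr ⟨ha, hab⟩) (Set.mem_Icc.mpr ⟨le_trans ha hab, le_refl b⟩) hab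
  rw [hHdef] at hH
  simp only at hH
  have expand : Real.exp (-b) * (b^(N+1) - a^(N+1)) / (((N+1).factorial : ℝ))
      = Real.exp (-b) * b^(N+1) / (((N+1).factorial : ℝ))
        - Real.exp (-b) * a^(N+1) / (((N+1).factorial : ℝ)) := by ring
  linarith

/-- With `α ∈ (0,1)^n`, `γ` a non-increasing rearrangement (0-indexed) of
`{α^ν : ν ∈ ℕ₀^n}` and `c = n! ∏ log(1/α_k)`, for every `m ≥ 0` the tail sum
`Σ_{l>m} γ_l = Σ_{i≥0} γ (m+i)` (0-indexed) satisfies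
`Σ ≤ (∏ α_k log(1/α_k))⁻¹ · Σ_{k=0}^{n-1} (c m)^{k/n}/k! · exp(−(c m)^{1/n})`. -/
theorem stmt2 {n : ℕ} (hn : 0 < n) (α : Fin n → ℝ)
    (hα0 : ∀ k, 0 < α k) (hα1 : ∀ k, α k < 1)
    (γ : ℕ → ℝ) (e : ℕ ≃ (Fin n → ℕ))
    (hγ : ∀ m, γ m = ∏ k, α k ^ (e m k))
    (hmono : Antitone γ) :
    ∀ m : ℕ,
      (∑' i : ℕ, γ (m + i)) ≤
        (∏ k, α k * Real.log (1 / α k))⁻¹ *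
          (∑ k ∈ Finset.range n,
            (((n.factorial : ℝ) * ∏ j, Real.log (1 / α j)) * m) ^ ((k : ℝ) / n)
              / (k.factorial : ℝ)) *
          Real.exp (-(((n.factorial : ℝ) * ∏ j, Real.log (1 / α j)) * m) ^ ((1 : ℝ) / n)) := by
  obtain ⟨N, rfl⟩ : ∃ N, n = N + 1 := ⟨n - 1, (Nat.succ_pred_eq_of_pos hn).symm⟩
  intro m
  set β : Fin (N+1) → ℝ := fun k => Real.log (1 / α k) with hβdef
  have hβ : ∀ k, 0 < β k := by
    intro k
    apply Real.log_pos
    rw [lt_div_iff₀ (hα0 k)]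
    simpa using hα1 k
  have hβlog : ∀ k, β k = - Real.log (α k) := by
    intro k; simp only [hβdef, one_div, Real.log_inv]
  set c : ℝ := ((N+1).factorial : ℝ) * ∏ j, β j with hcdef
  have hprodβ : 0 < ∏ j, β j := Finset.prod_pos fun j _ => hβ j
  have hc : 0 < c := by positivity
  set b : ℝ := ∑ k, β k with hbdef
  have hb : 0 < b := Finset.sum_pos (fun k _ => hβ k) Finset.univ_nonempty
  -- value formula
  set w : (Fin (N+1) → ℕ) → ℝ := fun ν => ∑ k, β k * ν k with hwdef
  have hw0 : ∀ ν, 0 ≤ w ν := fun ν =>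
    Finset.sum_nonneg fun k _ => mul_nonneg (hβ k).le (Nat.cast_nonneg _)
  have hγw : ∀ l, γ l = Real.exp (-(w (e l))) := by
    intro l
    rw [hγ l, hwdef]
    simp only [neg_eq_iff_eq_neg] at *
    rw [← Finset.sum_neg_distrib]
    rw [Real.exp_sum]
    apply Finset.prod_congr rfl
    intro k _
    rw [hβlog]
    have : -(-Real.log (α k) * (e l k)) = (e l k) * Real.log (α k) := by ring
    rw [this, Real.exp_nat_mul, Real.exp_log (hα0 k)]
  have hγ0 : ∀ l, 0 ≤ γ l := fun l => by rw [hγw]; positivity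
  have hγ1 : ∀ l, γ l ≤ 1 := by
    intro l
    rw [hγw]
    exact Real.exp_le_one_iff.mpr (neg_nonpos.mpr (hw0 _))
  -- Step B : per-term bound
  have stepB : ∀ l : ℕ, γ l ≤ Real.exp b * Real.exp (-(c * (l+1)) ^ ((1:ℝ)/(N+1))) := by
    intro l
    rw [← Real.exp_add]
    set s : ℝ := (c * (l+1)) ^ ((1:ℝ)/(N+1)) - b with hsdef
    have hbs : b + -(c * (l+1)) ^ ((1:ℝ)/(N+1)) = -s := by rw [hsdef]; ring
    rw [hbs]
    rcases le_or_gt s 0 with hs | hs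
    · calc γ l ≤ 1 := hγ1 l
        _ ≤ Real.exp (-s) := by
            rw [← Real.exp_zero]; exact Real.exp_le_exp.mpr (by linarith)
    · by_contra hcon
      push_neg at hcon
      set F : Finset (Fin (N+1) → ℕ) := (Finset.range (l+1)).image e with hFdef
      have hFcard : F.card = l + 1 := by
        rw [hFdef, Finset.card_image_of_injective _ e.injective, Finset.card_range]
      have hFne : F.Nonempty := by
        rw [← Finset.card_pos, hFcard]; omega
      have hFw : ∀ ν ∈ F, w ν < s := by
        intro ν hν
        rw [hFdef, Finset.mem_image] at hν
        obtain ⟨j, hj, rfl⟩ := hν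
        rw [Finset.mem_range, Nat.lt_succ_iff] at hj
        have h1 : Real.exp (-s) < γ j := lt_of_lt_of_le hcon (hmono hj)
        rw [hγw j] at h1
        have := Real.exp_lt_exp.mp h1
        linarith
      set σ : ℝ := F.sup' hFne w with hσdef
      have hσs : σ < s := (Finset.sup'_lt_iff hFne).mpr hFw
      have hσ0 : 0 ≤ σ := le_trans (hw0 hFne.choose) (Finset.le_sup' w hFne.choose_spec)
      have hcount := aux_count (N+1) β hβ σ hσ0 F
        (fun ν hν => Finset.le_sup' w hν)
      rw [hFcard] at hcount
      -- (σ + b)^(N+1) < (s + b)^(N+1) = c * (l+1)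
      have hpow : (σ + b)^(N+1) < (s + b)^(N+1) := by
        apply pow_lt_pow_left₀ (by linarith) (by linarith) (by omega)
      have hsb : (s + b)^(N+1) = c * (l+1) := by
        rw [hsdef, sub_add_cancel]
        have hcm : (0:ℝ) ≤ c * (l+1) := by positivity
        rw [← Real.rpow_natCast ((c * (l+1)) ^ ((1:ℝ)/(N+1))) (N+1), ← Real.rpow_mul hcm]
        push_cast
        rw [one_div, inv_mul_cancel₀ (by positivity : ((N:ℝ) + 1) ≠ 0), Real.rpow_one]
      rw [← hbdef] at hcount
      have : c * (l+1) ≤ (σ + b)^(N+1) := by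
        rw [hcdef]
        calc ((N+1).factorial : ℝ) * (∏ j, β j) * (l+1)
            = ((N+1).factorial : ℝ) * (∏ j, β j) * ((l+1 : ℕ) : ℝ) := by push_cast; ring
          _ ≤ (σ + b)^(N+1) := hcount
      linarith [hpow, hsb ▸ this]
  -- Step A : telescoping sum bound
  set u : ℕ → ℝ := fun l => (c * l) ^ ((1:ℝ)/(N+1)) with hudef
  set g : ℝ → ℝ := fun t => (∑ k ∈ Finset.range (N+1), t^k / (k.factorial:ℝ)) * Real.exp (-t)
    with hgdef
  have hu0 : ∀ l : ℕ, 0 ≤ u l := fun l => Real.rpow_nonneg (by positivity) _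
  have hupow : ∀ l : ℕ, (u l)^(N+1) = c * l := by
    intro l
    simp only [hudef]
    have hcm : (0:ℝ) ≤ c * l := by positivity
    rw [← Real.rpow_natCast ((c * l) ^ ((1:ℝ)/(N+1))) (N+1), ← Real.rpow_mul hcm]
    push_cast
    rw [one_div, inv_mul_cancel₀ (by positivity : ((N:ℝ) + 1) ≠ 0), Real.rpow_one]
  have humono : ∀ l : ℕ, u l ≤ u (l+1) := by
    intro l
    apply Real.rpow_le_rpow (by positivity) _ (by positivity)
    have : (0:ℝ) ≤ c := hc.le
    push_cast
    nlinarith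
  have stepB' : ∀ l : ℕ, γ l ≤ Real.exp b * Real.exp (-(u (l+1))) := by
    intro l
    have h := stepB l
    have heq : u (l+1) = (c * ((l:ℝ)+1)) ^ ((1:ℝ)/(N+1)) := by
      simp only [hudef]
      push_cast
      ring_nf
    rw [heq]
    exact h
  have hg0 : ∀ t : ℝ, 0 ≤ t → 0 ≤ g t := by
    intro t ht
    apply mul_nonneg _ (Real.exp_nonneg _)
    exact Finset.sum_nonneg fun k _ => div_nonneg (pow_nonneg ht k) (by positivity)
  have hstep : ∀ l : ℕ, Real.exp (-(u (l+1)))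
      ≤ (((N+1).factorial:ℝ)/c) * (g (u l) - g (u (l+1))) := by
    intro l
    have h := aux_step N (hu0 l) (humono l)
    rw [hupow l, hupow (l+1)] at h
    have hdiff : c * ((l+1:ℕ):ℝ) - c * (l:ℝ) = c := by push_cast; ring
    rw [hdiff] at h
    have hfac : (0:ℝ) < (((N+1).factorial:ℝ)) := by positivity
    have h2 : Real.exp (-(u (l+1))) * c / (((N+1).factorial:ℝ))
        ≤ g (u l) - g (u (l+1)) := h
    have hKnn : (0:ℝ) ≤ (((N+1).factorial:ℝ))/c := div_nonneg (by positivity) hc.le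
    calc Real.exp (-(u (l+1)))
        = (((N+1).factorial:ℝ)/c) * (Real.exp (-(u (l+1))) * c / (((N+1).factorial:ℝ))) := by
          field_simp
      _ ≤ (((N+1).factorial:ℝ)/c) * (g (u l) - g (u (l+1))) := by
          apply mul_le_mul_of_nonneg_left h2 hKnn
  have hpartial : ∀ M : ℕ, ∑ i ∈ Finset.range M, γ (m + i)
      ≤ Real.exp b * ((((N+1).factorial:ℝ)/c) * g (u m)) := by
    intro M
    have htel : ∑ i ∈ Finset.range M, (g (u (m+i)) - g (u (m+i+1)))
        = g (u m) - g (u (m+M)) := Finset.sum_range_sub' (fun i => g (u (m+i))) M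
    calc ∑ i ∈ Finset.range M, γ (m+i)
        ≤ ∑ i ∈ Finset.range M,
            Real.exp b * ((((N+1).factorial:ℝ)/c) * (g (u (m+i)) - g (u (m+i+1)))) := by
          apply Finset.sum_le_sum
          intro i _
          calc γ (m+i) ≤ Real.exp b * Real.exp (-(u (m+i+1))) := stepB' (m+i)
            _ ≤ Real.exp b * ((((N+1).factorial:ℝ)/c) * (g (u (m+i)) - g (u (m+i+1)))) := by
                apply mul_le_mul_of_nonneg_left (hstep (m+i)) (Real.exp_nonneg b)
      _ = Real.exp b * ((((N+1).factorial:ℝ)/c) *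
            ∑ i ∈ Finset.range M, (g (u (m+i)) - g (u (m+i+1)))) := by
          rw [Finset.mul_sum, Finset.mul_sum]
      _ = Real.exp b * ((((N+1).factorial:ℝ)/c) * (g (u m) - g (u (m+M)))) := by rw [htel]
      _ ≤ Real.exp b * ((((N+1).factorial:ℝ)/c) * g (u m)) := by
          have hgM : 0 ≤ g (u (m+M)) := hg0 _ (hu0 _)
          apply mul_le_mul_of_nonneg_left _ (Real.exp_nonneg b)
          apply mul_le_mul_of_nonneg_left _ (div_nonneg (by positivity) hc.le)
          linarith
  have htsum : (∑' i : ℕ, γ (m + i))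
      ≤ Real.exp b * ((((N+1).factorial:ℝ)/c) * g (u m)) :=
    Real.tsum_le_of_sum_range_le (fun i => hγ0 (m+i)) hpartial
  refine le_trans htsum (le_of_eq ?_)
  -- identify constants
  have hexpb : Real.exp b = (∏ k, α k)⁻¹ := by
    rw [hbdef, Real.exp_sum, ← Finset.prod_inv_distrib]
    apply Finset.prod_congr rfl
    intro k _
    simp only [hβdef, one_div]
    rw [Real.exp_log (inv_pos.mpr (hα0 k))]
  have hCprefix : Real.exp b * ((((N+1).factorial:ℝ))/c) = (∏ k, α k * β k)⁻¹ := by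
    rw [hexpb, hcdef, Finset.prod_mul_distrib, mul_inv]
    congr 1
    field_simp
  have hterm : ∀ k, k ∈ Finset.range (N+1) → (c * (m:ℝ)) ^ ((k:ℝ)/((N+1:ℕ):ℝ)) = (u m)^k := by
    intro k _
    simp only [hudef]
    rw [← Real.rpow_natCast ((c * (m:ℕ)) ^ ((1:ℝ)/(N+1))) k,
      ← Real.rpow_mul (by positivity : (0:ℝ) ≤ c * (m:ℕ))]
    congr 1
    push_cast
    ring
  have hexpe : (c * (m:ℝ)) ^ ((1:ℝ)/((N+1:ℕ):ℝ)) = u m := by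
    simp only [hudef]
    congr 1
    push_cast
    ring
  have hsumeq : ∑ k ∈ Finset.range (N+1), (c * (m:ℝ)) ^ ((k:ℝ)/((N+1:ℕ):ℝ)) / (k.factorial:ℝ)
      = ∑ k ∈ Finset.range (N+1), (u m)^k / (k.factorial:ℝ) :=
    Finset.sum_congr rfl fun k hk => by rw [hterm k hk]
  rw [hsumeq, hexpe, ← hCprefix, hgdef]
  ring
end

section
/- Let (λ_m)_{m∈ℕ} be a non-increasing sequence in [0,1] with 0 < Σ_m λ_m² ≤ Σ_m λ_m < ∞, and let 0 < γ < γ' < 1 and δ > 0 satisfy Σ_m λ_m² ≥ (1−δ) Σ_m λ_m. Then #{m : λ_m > γ} ≤ (1/γ' + δ/(γ(1−γ'))) · Σ_m λ_m. -/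
/-! Split `{m | γ < λ_m}` at `γ'`. Terms above `γ'` number at most `Σ λ_m / γ'`. A term in
`(γ, γ']` has `λ_m - λ_m² = λ_m (1 - λ_m) ≥ γ (1 - γ')`, while
`Σ (λ_m - λ_m²) ≤ δ Σ λ_m` is exactly the near-equality hypothesis, so these terms number at
most `δ Σ λ_m / (γ (1 - γ'))`. -/

open Set

/-- For infinite `s` this holds because `s.ncard = 0`. -/
theorem mul_ncard_le_tsum {α : Type*} {g : α → ℝ} {s : Set α} {c : ℝ} (hg : 0 ≤ g)
    (hsum : Summable g) (hc : ∀ x ∈ s, c ≤ g x) : c * s.ncard ≤ ∑' x, g x := by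
  by_cases hs : s.Finite
  · rw [ncard_eq_toFinset_card s hs, mul_comm, ← nsmul_eq_mul]
    calc hs.toFinset.card • c ≤ ∑ x ∈ hs.toFinset, g x :=
          Finset.card_nsmul_le_sum _ _ _ fun x hx => hc x (hs.mem_toFinset.mp hx)
      _ ≤ ∑' x, g x := hsum.sum_le_tsum _ fun x _ => hg x
  · rw [Infinite.ncard hs, Nat.cast_zero, mul_zero]
    exact tsum_nonneg hg

theorem summable_sq_of_mem_Icc {α : Type*} {f : α → ℝ} (hf : ∀ x, f x ∈ Icc (0 : ℝ) 1)
    (hsum : Summable f) : Summable fun x => f x ^ 2 :=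
  hsum.of_nonneg_of_le (fun x => sq_nonneg _) fun x => by
    nlinarith [(hf x).1, (hf x).2]

theorem mul_one_sub_le_sub_sq {γ γ' x : ℝ} (hγ : 0 < γ) (hγ' : γ' ≤ 1) (hx : x ∈ Ioc γ γ') :
    γ * (1 - γ') ≤ x - x ^ 2 :=
  calc γ * (1 - γ') ≤ x * (1 - x) :=
        mul_le_mul hx.1.le (by linarith [hx.2]) (by linarith) (hγ.trans hx.1).le
    _ = x - x ^ 2 := by ring

theorem stmt10_general (lam : ℕ → ℝ)
    (hmem : ∀ m, lam m ∈ Set.Icc (0 : ℝ) 1) (hsum : Summable lam)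
    (γ γ' δ : ℝ) (hγ0 : 0 < γ) (hγγ' : γ < γ') (hγ'1 : γ' < 1)
    (hδ2 : (1 - δ) * ∑' m, lam m ≤ ∑' m, (lam m) ^ 2) :
    ({m : ℕ | γ < lam m}.ncard : ℝ) ≤ (1 / γ' + δ / (γ * (1 - γ'))) * ∑' m, lam m := by
  have hlam : 0 ≤ lam := fun m => (hmem m).1
  have hsum2 := summable_sq_of_mem_Icc hmem hsum
  have hsplit : {m | γ < lam m} = {m | γ' < lam m} ∪ {m | lam m ∈ Ioc γ γ'} := by
    ext m
    simp only [mem_ofPred_eq, mem_union, mem_Ioc]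
    constructor
    · intro h
      by_cases h' : γ' < lam m
      · exact Or.inl h'
      · exact Or.inr ⟨h, not_lt.mp h'⟩
    · rintro (h | h)
      · exact hγγ'.trans h
      · exact h.1
  have hlarge : γ' * {m | γ' < lam m}.ncard ≤ ∑' m, lam m :=
    mul_ncard_le_tsum hlam hsum fun m hm => le_of_lt hm
  have hgap : 0 ≤ fun m => lam m - lam m ^ 2 := fun m =>
    sub_nonneg.mpr (pow_le_of_le_one (hmem m).1 (hmem m).2 two_ne_zero)
  have hmiddle : γ * (1 - γ') * {m | lam m ∈ Ioc γ γ'}.ncard ≤ δ * ∑' m, lam m := by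
    calc _ ≤ ∑' m, (lam m - lam m ^ 2) :=
          mul_ncard_le_tsum hgap (hsum.sub hsum2) fun m hm => mul_one_sub_le_sub_sq hγ0 hγ'1.le hm
      _ ≤ δ * ∑' m, lam m := by rw [hsum.tsum_sub hsum2]; linarith
  have hγ' : 0 < γ' := hγ0.trans hγγ'
  calc ({m : ℕ | γ < lam m}.ncard : ℝ)
      ≤ {m | γ' < lam m}.ncard + {m | lam m ∈ Ioc γ γ'}.ncard := by
        rw [hsplit]; exact_mod_cast ncard_union_le _ _
    _ ≤ (∑' m, lam m) / γ' + δ * (∑' m, lam m) / (γ * (1 - γ')) := by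
        gcongr
        · rwa [le_div_iff₀ hγ', mul_comm]
        · rwa [le_div_iff₀ (mul_pos hγ0 (sub_pos.mpr hγ'1)), mul_comm]
    _ = _ := by ring

/-- Let `(λ_m)` be a non-increasing summable sequence in `[0,1]` with
`0 < Σ λ_m² ≤ Σ λ_m`, and suppose `Σ λ_m² ≥ (1−δ) Σ λ_m` for `0 < γ < γ' < 1`, `δ > 0`.
Then `#{m : λ_m > γ} ≤ (1/γ' + δ/(γ(1−γ'))) Σ λ_m`. -/
theorem stmt10 (lam : ℕ → ℝ) (hmono : Antitone lam)
    (hmem : ∀ m, lam m ∈ Set.Icc (0 : ℝ) 1) (hsum : Summable lam)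
    (hpos : 0 < ∑' m, (lam m) ^ 2) (hle : (∑' m, (lam m) ^ 2) ≤ ∑' m, lam m)
    (γ γ' δ : ℝ) (hγ0 : 0 < γ) (hγγ' : γ < γ') (hγ'1 : γ' < 1) (hδ : 0 < δ)
    (hδ2 : (1 - δ) * ∑' m, lam m ≤ ∑' m, (lam m) ^ 2) :
    ({m : ℕ | γ < lam m}.ncard : ℝ) ≤ (1 / γ' + δ / (γ * (1 - γ'))) * ∑' m, lam m :=
  stmt10_general lam hmem hsum γ γ' δ hγ0 hγγ' hγ'1 hδ2
end
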